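/- arXiv:0804.2035 — 7 statements merged into one kernel-verified Lean document; each statement's English description precedes it below -/
import Mathlib

section
/- Let f : U → P*(S^(n)), U ∈ P*(S^(m)), be a time-invariant system which is non-anticipatory in the first sense. Then the set Û = {u ∈ U ∩ S₀^(m) : f(u) ∩ S₀^(n) ≠ ∅} is nonempty. -/
open Set
open scoped Classical

/-- `B^n`, the set of binary vectors of length `n`. -/
abbrev BV (n : ℕ) := Fin n → Bool

/-- `x : ℝ → α` is a signal: it has an initial value and a strictly increasing,
unbounded-from-above sequence of time instants on whose half-open intervals it is constant. -/
def IsSignal {α : Type*} (x : ℝ → α) : Prop :=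
  ∃ (a : α) (t : ℕ → ℝ), StrictMono t ∧ (∀ M : ℝ, ∃ k, M < t k) ∧
    (∀ s, s < t 0 → x s = a) ∧
    (∀ k : ℕ, ∀ s, t k ≤ s → s < t (k + 1) → x s = x (t k))

/-- The set of signals with values in `α`. -/
def Sig (α : Type*) : Set (ℝ → α) := {x | IsSignal x}

/-- The left limit `x(t-0)`: the common value of `x` on `(t-ε, t)` for small `ε > 0`
(junk value `x t` if no such common value exists). -/
noncomputable def leftLim {α : Type*} (x : ℝ → α) (t : ℝ) : α :=
  if h : ∃ v, ∃ ε, 0 < ε ∧ ∀ s, t - ε < s → s < t → x s = v then h.choose else x t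

/-- A constant signal. -/
def IsConstantSig {α : Type*} (x : ℝ → α) : Prop := ∀ s t : ℝ, x s = x t

/-- The first switch time `min {t | x(t-0) ≠ x(t)}` (for a variable signal the
infimum is attained, so it is the minimum). -/
noncomputable def firstSwitch {α : Type*} (x : ℝ → α) : ℝ :=
  sInf {t | leftLim x t ≠ x t}

/-- Non-anticipation in the first sense: every state is constant, or the input and the
state are both variable and the first input switch is prior to the first state switch. -/
def NonAnticip1 {α β : Type*} (U : Set (ℝ → α)) (f : (ℝ → α) → Set (ℝ → β)) : Prop :=
  ∀ u ∈ U, ∀ x ∈ f u, IsConstantSig x ∨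
    (¬ IsConstantSig u ∧ ¬ IsConstantSig x ∧ firstSwitch u ≤ firstSwitch x)

/-- The translation `x ∘ τ^d`, `(x ∘ τ^d)(t) = x(t - d)`. -/
def tr {α : Type*} (d : ℝ) (x : ℝ → α) : ℝ → α := fun t => x (t - d)

/-- `S₀`: the signals that are constant (equal to their initial value) on `(-∞, 0)`. -/
def Sig0 (α : Type*) : Set (ℝ → α) :=
  {u | IsSignal u ∧ ∀ s, s < (0:ℝ) → ∀ t', t' < (0:ℝ) → u s = u t'}

/-- Time invariance of the system `f` with input set `U`. -/
def TimeInv {α β : Type*} (U : Set (ℝ → α)) (f : (ℝ → α) → Set (ℝ → β)) : Prop :=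
  ∀ d : ℝ, ∀ u ∈ U, tr d u ∈ U ∧ ∀ x ∈ f u, tr d x ∈ f (tr d u)

/-- `f : U → P*(S^(n))` is an asynchronous system: `U` is a nonempty set of signals and
each set of states `f u`, `u ∈ U`, is a nonempty set of signals. -/
def IsSystem {α β : Type*} (U : Set (ℝ → α)) (f : (ℝ → α) → Set (ℝ → β)) : Prop :=
  U.Nonempty ∧ U ⊆ Sig α ∧ ∀ u ∈ U, (f u).Nonempty ∧ f u ⊆ Sig β

/-- Non-anticipation in the second sense: if two inputs coincide on `(-∞, t)`, then the
sets of restrictions of the states to `(-∞, t]` coincide. -/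
def NonAnticip2 {α β : Type*} (U : Set (ℝ → α)) (f : (ℝ → α) → Set (ℝ → β)) : Prop :=
  ∀ t : ℝ, ∀ u ∈ U, ∀ v ∈ U, EqOn u v (Iio t) →
    ((fun x => (Iic t).restrict x) '' f u) = ((fun x => (Iic t).restrict x) '' f v)

lemma tr_isSignal {α : Type*} {x : ℝ → α} (hx : IsSignal x) (d : ℝ) : IsSignal (tr d x) := by
  obtain ⟨a, t, hmono, hub, hinit, hstep⟩ := hx
  refine ⟨a, fun k => t k + d, fun i j hij => by simpa using hmono hij, fun M => ?_, ?_, ?_⟩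
  · obtain ⟨k, hk⟩ := hub (M - d); exact ⟨k, by simpa using by linarith⟩
  · intro s hs
    exact hinit _ (by simp only [tr] at *; linarith [hs])
  · intro k s h1 h2
    have h1' : t k + d ≤ s := h1
    have h2' : s < t (k + 1) + d := h2
    have h : x (s - d) = x (t k) := hstep k (s - d) (by linarith) (by linarith)
    show x (s - d) = x (t k + d - d)
    rw [add_sub_cancel_right]; exact h

/-- for a time-invariant system that is non-anticipatory in the first sense,
`Û = {u ∈ U ∩ S₀^(m) | f(u) ∩ S₀^(n) ≠ ∅}` is nonempty. -/
theorem Uhat_nonempty {m n : ℕ}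
    (U : Set (ℝ → BV m)) (f : (ℝ → BV m) → Set (ℝ → BV n))
    (hsys : IsSystem U f) (hti : TimeInv U f) (hna : NonAnticip1 U f) :
    {u | u ∈ U ∩ Sig0 (BV m) ∧ (f u ∩ Sig0 (BV n)).Nonempty}.Nonempty := by
  obtain ⟨⟨u, hu⟩, hUS, hf⟩ := hsys
  obtain ⟨hfu_ne, hfu_sig⟩ := hf u hu
  obtain ⟨x, hx⟩ := hfu_ne
  have hus : IsSignal u := hUS hu
  have hxs : IsSignal x := hfu_sig hx
  obtain ⟨a, tu, hmu, hbu, hua, hcu⟩ := hus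
  obtain ⟨b, tx, hmx, hbx, hxb, hcx⟩ := hxs
  set d : ℝ := max (-tu 0) (-tx 0) + 1 with hd
  have hdu : (0:ℝ) < tu 0 + d := by
    have := le_max_left (-tu 0) (-tx 0); simp only [hd]; linarith
  have hdx : (0:ℝ) < tx 0 + d := by
    have := le_max_right (-tu 0) (-tx 0); simp only [hd]; linarith
  obtain ⟨hUd, hfd⟩ := hti d u hu
  have hsigu : IsSignal (tr d u) := tr_isSignal ⟨a, tu, hmu, hbu, hua, hcu⟩ d
  obtain ⟨hfd_ne, hfd_sig⟩ := hf (tr d u) hUd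
  have hxd : tr d x ∈ f (tr d u) := hfd x hx
  have hsigx : IsSignal (tr d x) := hfd_sig hxd
  refine ⟨tr d u, ⟨⟨hUd, hsigu, ?_⟩, tr d x, hxd, hsigx, ?_⟩⟩
  · intro s hs t' ht'
    have h1 : tr d u s = a := hua (s - d) (by linarith)
    have h2 : tr d u t' = a := hua (t' - d) (by linarith)
    rw [h1, h2]
  · intro s hs t' ht'
    have h1 : tr d x s = b := hxb (s - d) (by linarith)
    have h2 : tr d x t' = b := hxb (t' - d) (by linarith)
    rw [h1, h2]
end

section
/- Let f : U → P*(S^(n)), U ∈ P*(S^(m)), be a time-invariant system which is non-anticipatory in the first sense. Define Û = {u ∈ U ∩ S₀^(m) : f(u) ∩ S₀^(n) ≠ ∅} (which is nonempty) and f̂ : Û → P*(S^(n)) by f̂(u) = f(u) ∩ S₀^(n). Then: (iii) for all d ∈ ℝ, u ∈ Û and x, if x ∈ f̂(u) and u∘τ^d ∈ Û, then x∘τ^d ∈ f̂(u∘τ^d); moreover f̂ is non-anticipatory in the first sense. -/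
open Set
open scoped Classical

/-! A time shift moves the interval `(-∞, 0)` on which a state of `f̂` must be constant to
`(-∞, -d)`. If the shifted input is still in `Û`, the input is constant on `(-∞, -d)`, so its
first switch is at or after `-d`; non-anticipation puts the first switch of the state even
later, hence the state is constant on `(-∞, -d)` too. -/

variable {α β : Type*}

-- `u ∈ Sig0 α` unfolds to `IsSignal u ∧ ConstOnIio u 0`.
def ConstOnIio (x : ℝ → α) (c : ℝ) : Prop := ∀ s, s < c → ∀ t, t < c → x s = x t

lemma constOnIio_tr_iff {x : ℝ → α} {d c : ℝ} : ConstOnIio (tr d x) c ↔ ConstOnIio x (c - d) := by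
  constructor
  · intro h s hs t ht
    simpa [tr] using h (s + d) (by linarith) (t + d) (by linarith)
  · intro h s hs t ht
    exact h (s - d) (by linarith) (t - d) (by linarith)

lemma leftLim_eq_of_forall {x : ℝ → α} {t ε : ℝ} {v : α} (hε : 0 < ε)
    (h : ∀ s, t - ε < s → s < t → x s = v) : leftLim x t = v := by
  have hex : ∃ v, ∃ ε, 0 < ε ∧ ∀ s, t - ε < s → s < t → x s = v := ⟨v, ε, hε, h⟩
  obtain ⟨ε', hε', h'⟩ := hex.choose_spec
  rw [leftLim, dif_pos hex]
  have hδ : 0 < min ε ε' := lt_min hε hε'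
  have hs : t - min ε ε' / 2 < t := by linarith
  rw [← h' _ (by linarith [min_le_right ε ε']) hs, h _ (by linarith [min_le_left ε ε']) hs]

namespace IsSignal

variable {x : ℝ → α}

lemma constOnIio_of_forall_leftLim_eq (hx : IsSignal x) {c : ℝ}
    (h : ∀ t, t < c → leftLim x t = x t) : ConstOnIio x c := by
  obtain ⟨a, t, -, hub, h0, hstep⟩ := hx
  have hval : ∀ k, ∀ s, s < t k → s < c → x s = a := by
    intro k
    induction k with
    | zero => exact fun s hs _ => h0 s hs
    | succ k ih =>
      intro s hs hsc
      rcases lt_or_ge s (t k) with hlt | hle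
      · exact ih s hlt hsc
      have htc : t k < c := hle.trans_lt hsc
      rw [hstep k s hle hs, ← h (t k) htc,
        leftLim_eq_of_forall one_pos fun r _ hr => ih r hr (hr.trans htc)]
  intro s hs s' hs'
  obtain ⟨k, hk⟩ := hub (max s s')
  rw [hval k s ((le_max_left s s').trans_lt hk) hs, hval k s' ((le_max_right s s').trans_lt hk) hs']

lemma bddBelow_switches (hx : IsSignal x) : BddBelow {t | leftLim x t ≠ x t} := by
  obtain ⟨a, t, -, -, h0, -⟩ := hx
  refine ⟨t 0, fun s hs => not_lt.1 fun hlt => hs ?_⟩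
  rw [leftLim_eq_of_forall one_pos fun r _ hr => h0 r (hr.trans hlt), h0 s hlt]

lemma switches_nonempty (hx : IsSignal x) (hnc : ¬ IsConstantSig x) :
    {t | leftLim x t ≠ x t}.Nonempty := by
  by_contra hempty
  refine hnc fun s s' => hx.constOnIio_of_forall_leftLim_eq (c := max s s' + 1)
    (fun r _ => not_not.1 fun hr => hempty ⟨r, hr⟩) s ?_ s' ?_
  · linarith [le_max_left s s']
  · linarith [le_max_right s s']

lemma le_firstSwitch (hx : IsSignal x) (hnc : ¬ IsConstantSig x) {c : ℝ}
    (h : ConstOnIio x c) : c ≤ firstSwitch x :=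
  le_csInf (hx.switches_nonempty hnc) fun t ht => not_lt.1 fun hlt =>
    ht (leftLim_eq_of_forall one_pos fun r _ hr => h r (hr.trans hlt) t hlt)

lemma constOnIio_of_le_firstSwitch (hx : IsSignal x) {c : ℝ} (h : c ≤ firstSwitch x) :
    ConstOnIio x c :=
  hx.constOnIio_of_forall_leftLim_eq fun _ ht => not_not.1 fun hne =>
    (csInf_le hx.bddBelow_switches hne).not_gt (ht.trans_le h)

lemma tr (hx : IsSignal x) (d : ℝ) : IsSignal (tr d x) := by
  obtain ⟨a, t, hmono, hub, h0, hstep⟩ := hx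
  refine ⟨a, fun k => t k + d, fun i j hij => by simpa using hmono hij, fun M => ?_, ?_, ?_⟩
  · obtain ⟨k, hk⟩ := hub (M - d)
    exact ⟨k, by linarith⟩
  · intro s hs
    exact h0 (s - d) (by linarith)
  · intro k s h1 h2
    simpa [_root_.tr] using hstep k (s - d) (by linarith) (by linarith)

end IsSignal

namespace NonAnticip1

variable {U U' : Set (ℝ → α)} {f f' : (ℝ → α) → Set (ℝ → β)}

lemma constOnIio_of_mem (hna : NonAnticip1 U f) {u : ℝ → α} {x : ℝ → β} (hu : u ∈ U)
    (hx : x ∈ f u) (hus : IsSignal u) (hxs : IsSignal x) {c : ℝ} (huc : ConstOnIio u c) :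
    ConstOnIio x c := by
  rcases hna u hu x hx with hconst | ⟨hunc, -, hle⟩
  · exact fun s _ t _ => hconst s t
  · exact hxs.constOnIio_of_le_firstSwitch ((hus.le_firstSwitch hunc huc).trans hle)

lemma mono (hna : NonAnticip1 U f) (hU : U' ⊆ U) (hf : ∀ u ∈ U', f' u ⊆ f u) :
    NonAnticip1 U' f' :=
  fun u hu x hx => hna u (hU hu) x (hf u hu hx)

end NonAnticip1

/-- for a time-invariant system `f` that is non-anticipatory in the first sense,
the system `f̂ : Û → P*(S^(n))`, `f̂(u) = f(u) ∩ S₀^(n)`, satisfies property (iii) and is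
non-anticipatory in the first sense. -/
theorem fhat_prop_iii_and_nonAnticip1 {m n : ℕ}
    (U : Set (ℝ → BV m)) (f : (ℝ → BV m) → Set (ℝ → BV n))
    (hsys : IsSystem U f) (hti : TimeInv U f) (hna : NonAnticip1 U f)
    (Uhat : Set (ℝ → BV m))
    (hUhat : Uhat = {u | u ∈ U ∩ Sig0 (BV m) ∧ (f u ∩ Sig0 (BV n)).Nonempty}) :
    (∀ d : ℝ, ∀ u ∈ Uhat, ∀ x ∈ f u ∩ Sig0 (BV n),
        tr d u ∈ Uhat → tr d x ∈ f (tr d u) ∩ Sig0 (BV n)) ∧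
    NonAnticip1 Uhat (fun u => f u ∩ Sig0 (BV n)) := by
  subst hUhat
  refine ⟨fun d u hu x hx hdu => ⟨(hti d u hu.1.1).2 x hx.1, hx.2.1.tr d, ?_⟩,
    hna.mono (fun u hu => hu.1.1) fun u _ => inter_subset_left⟩
  have hu_const : ConstOnIio u (0 - d) := constOnIio_tr_iff.1 hdu.1.2.2
  exact constOnIio_tr_iff.2 <|
    hna.constOnIio_of_mem hu.1.1 hx.1 (hsys.2.1 hu.1.1) hx.2.1 hu_const
end

section
/- Let f̂ : Û → P*(S^(n)), Û ∈ P*(S^(m)), be a system satisfying: (i) Û ⊆ S₀^(m); (ii) for all u ∈ Û, f̂(u) ⊆ S₀^(n); (iii) for all d ∈ ℝ, u ∈ Û and x, if x ∈ f̂(u) and u∘τ^d ∈ Û then x∘τ^d ∈ f̂(u∘τ^d); and suppose f̂ is non-anticipatory in the first sense. Define U = {u∘τ^d : d ∈ ℝ, u ∈ Û} and f : U → P*(S^(n)) by f(u∘τ^d) = {x∘τ^d : x ∈ f̂(u)}. Then f is non-anticipatory in the first sense. -/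
/-!
Translation by `d` shifts every switch time of a signal by `d`: the left limit of `x ∘ τ^d` at `t`
is the left limit of `x` at `t - d`. A signal is constant before its first sampling instant, so
the switch set of a variable signal is nonempty and bounded below, and its infimum is shifted by
`d` as well. Hence `x ∘ τ^d` is constant exactly when `x` is, and the inequality between the first
switch times of `u` and `x` survives the common translation.
-/

open Set
open scoped Classical

/-- `firstSwitch x` is by definition `sInf (switchSet x)`. -/
def switchSet {α : Type*} (x : ℝ → α) : Set ℝ := {t | leftLim x t ≠ x t}

section Signal

variable {α : Type*} {x : ℝ → α}

lemma leftLim_eq_of_eq_on_Ioo {t : ℝ} {v : α} {ε : ℝ} (hε : 0 < ε)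
    (hv : ∀ s, t - ε < s → s < t → x s = v) : leftLim x t = v := by
  have h : ∃ v, ∃ ε, 0 < ε ∧ ∀ s, t - ε < s → s < t → x s = v := ⟨v, ε, hε, hv⟩
  rw [leftLim, dif_pos h]
  obtain ⟨ε', hε', hv'⟩ := h.choose_spec
  have hmin : 0 < min ε ε' := lt_min hε hε'
  have hs₁ : t - ε < t - min ε ε' / 2 := by linarith [min_le_left ε ε']
  have hs₂ : t - ε' < t - min ε ε' / 2 := by linarith [min_le_right ε ε']
  rw [← hv' _ hs₂ (by linarith), hv _ hs₁ (by linarith)]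

lemma leftLim_tr (d t : ℝ) : leftLim (tr d x) t = leftLim x (t - d) := by
  by_cases h : ∃ v, ∃ ε, 0 < ε ∧ ∀ s, t - ε < s → s < t → tr d x s = v
  · obtain ⟨v, ε, hε, hv⟩ := h
    rw [leftLim_eq_of_eq_on_Ioo hε hv]
    exact (leftLim_eq_of_eq_on_Ioo hε fun s h₁ h₂ =>
      by simpa [tr] using hv (s + d) (by linarith) (by linarith)).symm
  · have h' : ¬ ∃ v, ∃ ε, 0 < ε ∧ ∀ s, t - d - ε < s → s < t - d → x s = v :=
      fun ⟨v, ε, hε, hv⟩ => h ⟨v, ε, hε, fun s h₁ h₂ => hv (s - d) (by linarith) (by linarith)⟩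
    rw [leftLim, dif_neg h, leftLim, dif_neg h']
    rfl

lemma isConstantSig_tr_iff (d : ℝ) : IsConstantSig (tr d x) ↔ IsConstantSig x :=
  ⟨fun h s t => by simpa [tr] using h (s + d) (t + d), fun h _ _ => h _ _⟩

lemma switchSet_tr (d : ℝ) : switchSet (tr d x) = OrderIso.addRight d '' switchSet x := by
  ext t
  simp only [switchSet, mem_ofPred_eq, mem_image, leftLim_tr, OrderIso.addRight_apply]
  exact ⟨fun h => ⟨t - d, h, sub_add_cancel t d⟩, by rintro ⟨s, hs, rfl⟩; simpa [tr] using hs⟩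

/-- Before the `k`-th sampling instant a switch-free signal still has its initial value, because
at each instant the value agrees with the left limit. -/
lemma isConstantSig_of_switchSet_eq_empty (hx : IsSignal x) (h : switchSet x = ∅) :
    IsConstantSig x := by
  obtain ⟨a, t, -, hub, hbefore, hstep⟩ := hx
  have hcont : ∀ s, leftLim x s = x s := fun s => of_not_not fun hs => h.subset hs
  have hbelow : ∀ k, ∀ s, s < t k → x s = a := by
    intro k
    induction k with
    | zero => exact hbefore
    | succ k ih =>
      intro s hs
      rcases lt_or_ge s (t k) with hlt | hge
      · exact ih s hlt
      · rw [hstep k s hge hs, ← hcont, leftLim_eq_of_eq_on_Ioo one_pos fun s' _ h' => ih s' h']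
  have hconst : ∀ s, x s = a := fun s => (hub s).elim fun k hk => hbelow k s hk
  exact fun s s' => by rw [hconst, hconst]

lemma switchSet_nonempty (hx : IsSignal x) (hvar : ¬ IsConstantSig x) :
    (switchSet x).Nonempty :=
  nonempty_iff_ne_empty.mpr fun h => hvar (isConstantSig_of_switchSet_eq_empty hx h)

lemma bddBelow_switchSet (hx : IsSignal x) : BddBelow (switchSet x) := by
  obtain ⟨a, t, -, -, hbefore, -⟩ := hx
  refine ⟨t 0, fun s hs => le_of_not_gt fun hlt => hs ?_⟩
  rw [hbefore s hlt]
  exact leftLim_eq_of_eq_on_Ioo one_pos fun s' _ h' => hbefore s' (h'.trans hlt)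

lemma firstSwitch_tr (hx : IsSignal x) (hvar : ¬ IsConstantSig x) (d : ℝ) :
    firstSwitch (tr d x) = firstSwitch x + d := by
  change sInf (switchSet (tr d x)) = sInf (switchSet x) + d
  rw [switchSet_tr, ← OrderIso.map_csInf' _ (switchSet_nonempty hx hvar) (bddBelow_switchSet hx)]
  rfl

end Signal

theorem extended_system_nonAnticip1_general {m n : ℕ}
    (Uhat : Set (ℝ → BV m)) (fhat : (ℝ → BV m) → Set (ℝ → BV n))
    (h1 : Uhat ⊆ Sig0 (BV m))
    (h2 : ∀ u ∈ Uhat, fhat u ⊆ Sig0 (BV n))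
    (hna : NonAnticip1 Uhat fhat)
    (Unew : Set (ℝ → BV m))
    (hUnew : Unew = {w | ∃ d : ℝ, ∃ u ∈ Uhat, w = tr d u})
    (fnew : (ℝ → BV m) → Set (ℝ → BV n))
    (hfnew : ∀ d : ℝ, ∀ u ∈ Uhat, fnew (tr d u) = tr d '' fhat u) :
    NonAnticip1 Unew fnew := by
  rintro _ hw
  obtain ⟨d, u, hu, rfl⟩ := hUnew ▸ hw
  rintro _ hx'
  obtain ⟨x, hx, rfl⟩ := hfnew d u hu ▸ hx'
  rcases hna u hu x hx with hconst | ⟨hu_var, hx_var, hle⟩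
  · exact Or.inl ((isConstantSig_tr_iff d).mpr hconst)
  · refine Or.inr ⟨mt (isConstantSig_tr_iff d).mp hu_var, mt (isConstantSig_tr_iff d).mp hx_var, ?_⟩
    rw [firstSwitch_tr (h1 hu).1 hu_var, firstSwitch_tr (h2 u hu hx).1 hx_var]
    exact add_le_add_left hle d

/-- under properties (i), (ii), (iii) and non-anticipation (first sense) of
`f̂`, the extended system `f : U → P*(S^(n))`, `U = {u ∘ τ^d | d ∈ ℝ, u ∈ Û}`,
`f(u ∘ τ^d) = {x ∘ τ^d | x ∈ f̂(u)}`, is non-anticipatory in the first sense. -/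
theorem extended_system_nonAnticip1 {m n : ℕ}
    (Uhat : Set (ℝ → BV m)) (fhat : (ℝ → BV m) → Set (ℝ → BV n))
    (hsys : IsSystem Uhat fhat)
    (h1 : Uhat ⊆ Sig0 (BV m))
    (h2 : ∀ u ∈ Uhat, fhat u ⊆ Sig0 (BV n))
    (h3 : ∀ d : ℝ, ∀ u ∈ Uhat, ∀ x ∈ fhat u, tr d u ∈ Uhat → tr d x ∈ fhat (tr d u))
    (hna : NonAnticip1 Uhat fhat)
    (Unew : Set (ℝ → BV m))
    (hUnew : Unew = {w | ∃ d : ℝ, ∃ u ∈ Uhat, w = tr d u})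
    (fnew : (ℝ → BV m) → Set (ℝ → BV n))
    (hfnew : ∀ d : ℝ, ∀ u ∈ Uhat, fnew (tr d u) = tr d '' fhat u) :
    NonAnticip1 Unew fnew :=
  extended_system_nonAnticip1_general Uhat fhat h1 h2 hna Unew hUnew fnew hfnew
end

section
/- Let f : U → P*(S^(n)), U ∈ P*(S^(m)), be a system satisfying: (a) for all t ∈ ℝ and u, v ∈ U, the signal equal to u on (−∞, t) and to v on [t, ∞) belongs to U; (b) f is non-anticipatory in the second sense; (c) non-anticipation*: for all t ∈ ℝ and u, v ∈ U, if u = v on [t, ∞) and {x(t) : x ∈ f(u)} = {y(t) : y ∈ f(v)}, then {x restricted to [t, ∞) : x ∈ f(u)} = {y restricted to [t, ∞) : y ∈ f(v)}; (d) f is time invariant. Suppose (e): t₁, t₂ ∈ ℝ, u⁰, u¹ ∈ U and μ, μ′, μ″ ∈ B^n are such that: for all x ∈ f(u⁰) there exists t₀ < t₁ with x(t₀) = μ; for all x ∈ f(u⁰), x(t₁) = μ′; for all x′ ∈ f(u¹), x′(t₂) = μ′; for all x′ ∈ f(u¹) there exists t₃ > t₂ with x′(t₃) = μ″. Put d = t₁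 − t₂ and let ũ be the signal equal to u⁰ on (−∞, t₁) and to u¹∘τ^d on [t₁, ∞). Then ũ ∈ U and: for all x̃ ∈ f(ũ) there exists t₀ < t₁ with x̃(t₀) = μ, and for all x̃ ∈ f(ũ) there exists t₃′ > t₁ with x̃(t₃′) = μ″. -/
open Set
open scoped Classical

/-- The concatenation of `u` on `(-∞, t)` with `v` on `[t, ∞)`. -/
noncomputable def concat {α : Type*} (t : ℝ) (u v : ℝ → α) : ℝ → α :=
  fun s => if s < t then u s else v s

/-- Theorem on the transfers of the non-anticipatory systems: if `f(u⁰)`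
transfers `μ` in `μ'` and `f(u¹)` transfers `μ'` in `μ''`, then `f(ũ)` transfers `μ` in
`μ''`, where `ũ = u⁰ · χ_(-∞,t₁) ⊕ (u¹ ∘ τ^{t₁-t₂}) · χ_[t₁,∞)`. -/
theorem transfer_composition {m n : ℕ}
    (U : Set (ℝ → BV m)) (f : (ℝ → BV m) → Set (ℝ → BV n))
    (hsys : IsSystem U f)
    (ha : ∀ t : ℝ, ∀ u ∈ U, ∀ v ∈ U, concat t u v ∈ U)
    (hb : NonAnticip2 U f)
    (hc : ∀ t : ℝ, ∀ u ∈ U, ∀ v ∈ U, EqOn u v (Ici t) →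
        ((fun x => x t) '' f u) = ((fun x => x t) '' f v) →
        ((fun x : ℝ → BV n => (Ici t).restrict x) '' f u) =
          ((fun x : ℝ → BV n => (Ici t).restrict x) '' f v))
    (hd : TimeInv U f)
    (t₁ t₂ : ℝ) (u0 u1 : ℝ → BV m) (hu0 : u0 ∈ U) (hu1 : u1 ∈ U)
    (μ μ' μ'' : BV n)
    (he1 : ∀ x ∈ f u0, ∃ t₀ < t₁, x t₀ = μ)
    (he2 : ∀ x ∈ f u0, x t₁ = μ')
    (he3 : ∀ x' ∈ f u1, x' t₂ = μ')
    (he4 : ∀ x' ∈ f u1, ∃ t₃ > t₂, x' t₃ = μ'') :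
    concat t₁ u0 (tr (t₁ - t₂) u1) ∈ U ∧
    (∀ x ∈ f (concat t₁ u0 (tr (t₁ - t₂) u1)),
      (∃ t₀ < t₁, x t₀ = μ) ∧ (∃ t₃' > t₁, x t₃' = μ'')) := by
  set d := t₁ - t₂ with hdval
  set v := tr d u1 with hv
  have hvU : v ∈ U := (hd d u1 hu1).1
  have hmap : ∀ x ∈ f u1, tr d x ∈ f v := (hd d u1 hu1).2
  set ut := concat t₁ u0 v with hut
  have hutU : ut ∈ U := ha t₁ u0 hu0 v hvU
  -- every element of f v satisfies the translated properties
  have hvback : ∀ y ∈ f v, tr (-d) y ∈ f u1 := by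
    intro y hy
    have h := (hd (-d) v hvU).2 y hy
    have : tr (-d) v = u1 := by
      funext t; simp [hv, tr]
    rwa [this] at h
  have hv3 : ∀ y ∈ f v, y t₁ = μ' := by
    intro y hy
    have := he3 _ (hvback y hy)
    simpa [tr, hdval, show t₂ - -d = t₁ by ring] using this
  have hv4 : ∀ y ∈ f v, ∃ t₃ > t₁, y t₃ = μ'' := by
    intro y hy
    obtain ⟨t₃, ht₃, hval⟩ := he4 _ (hvback y hy)
    refine ⟨t₃ + d, by simp only [hdval]; linarith, ?_⟩
    have : (tr (-d) y) t₃ = y (t₃ + d) := by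
      simp only [tr, sub_neg_eq_add]
    rw [← this]; exact hval
  -- ut agrees with u0 on (-∞, t₁)
  have heq1 : EqOn ut u0 (Iio t₁) := by
    intro s hs; simp [hut, concat, hs.out]
  have hb1 := hb t₁ ut hutU u0 hu0 heq1
  -- ut agrees with v on [t₁, ∞)
  have heq2 : EqOn ut v (Ici t₁) := by
    intro s hs
    simp [hut, concat, not_lt.mpr hs.out]
  -- each x ∈ f ut agrees on (-∞,t₁] with some y ∈ f u0
  have hmatch : ∀ x ∈ f ut, ∃ y ∈ f u0, ∀ s ≤ t₁, x s = y s := by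
    intro x hx
    have : (Iic t₁).restrict x ∈ (fun x => (Iic t₁).restrict x) '' f u0 := by
      rw [← hb1]; exact ⟨x, hx, rfl⟩
    obtain ⟨y, hy, hres⟩ := this
    exact ⟨y, hy, fun s hs => (congrFun hres ⟨s, hs⟩).symm⟩
  -- x t₁ = μ' for x ∈ f ut
  have hutμ' : ∀ x ∈ f ut, x t₁ = μ' := by
    intro x hx
    obtain ⟨y, hy, hxy⟩ := hmatch x hx
    rw [hxy t₁ le_rfl]; exact he2 y hy
  -- images at t₁ coincide
  have himg : ((fun x => x t₁) '' f ut) = ((fun x => x t₁) '' f v) := by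
    obtain ⟨xut, hxut⟩ := (hsys.2.2 ut hutU).1
    obtain ⟨xv, hxv⟩ := (hsys.2.2 v hvU).1
    apply Set.eq_of_subset_of_subset
    · rintro _ ⟨x, hx, rfl⟩
      exact ⟨xv, hxv, by simp only; rw [hv3 xv hxv, hutμ' x hx]⟩
    · rintro _ ⟨y, hy, rfl⟩
      exact ⟨xut, hxut, by simp only; rw [hutμ' xut hxut, hv3 y hy]⟩
  have hc1 := hc t₁ ut hutU v hvU heq2 himg
  refine ⟨hutU, fun x hx => ⟨?_, ?_⟩⟩
  · obtain ⟨y, hy, hxy⟩ := hmatch x hx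
    obtain ⟨t₀, ht₀, hval⟩ := he1 y hy
    exact ⟨t₀, ht₀, by rw [hxy t₀ ht₀.le]; exact hval⟩
  · have : (Ici t₁).restrict x ∈ (fun x : ℝ → BV n => (Ici t₁).restrict x) '' f v := by
      rw [← hc1]; exact ⟨x, hx, rfl⟩
    obtain ⟨y, hy, hres⟩ := this
    obtain ⟨t₃, ht₃, hval⟩ := hv4 y hy
    exact ⟨t₃, ht₃, (congrFun hres ⟨t₃, ht₃.le⟩ : y t₃ = x t₃).symm.trans hval⟩
end

section
/- Let f : U → P*(S^(n)), U ∈ P*(S^(m)), be a system which is non-anticipatory in the second sense and satisfies: (a) for every strictly increasing unbounded real sequence (t_k)_{k∈ℕ} and every sequence (u^k) in U, the signal equal to u⁰ on (−∞, t₀) and to u^{k+1} on [t_k, t_{k+1}) for each k belongs to U; (b) for every u ∈ U there exist μ ∈ B^n and t ∈ ℝ such that every x ∈ f(u) equals μ on (−∞, t); (c) for every μ ∈ B^n, u ∈ U and t ∈ ℝ there exist v ∈ U and t′ > t such that u = v on (−∞, t) and every y ∈ f(v) equals μ on [t′, ∞). Then there exists μ⁰ ∈ B^n such that for every sequence (μ^k)_{k≥1}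 in B^n there exist a strictly increasing unbounded real sequence (t_k)_{k∈ℕ}, a sequence (u^k)_{k∈ℕ} in U and an input ũ ∈ U satisfying: every x ∈ f(u⁰) equals μ⁰ on (−∞, t₀) and equals μ¹ on [t₁, ∞); for every k ∈ ℕ, ũ coincides with u^k on (−∞, t_{k+1}); and for every k ≥ 1, every x ∈ f(u^k) equals μ^{k+1} on [t_{k+1}, ∞). -/
open Set
open scoped Classical

/-- The concatenation of a sequence of signals along a sequence of time instants:
equal to `us 0` on `(-∞, t 0)` and to `us (k+1)` on `[t k, t (k+1))`. -/
noncomputable def concatSeq {α : Type*} (t : ℕ → ℝ) (us : ℕ → (ℝ → α)) : ℝ → α :=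
  fun s => if h : ∃ k, s < t k then us (Nat.find h) s else us 0 s

/-- Accessibility vs fundamental mode: under closure under concatenation,
race-free initial states with bounded initial time, and accessibility, an initial state
`μ⁰` exists such that every sequence `(μ^k)_{k≥1}` of binary vectors is realized by a
fundamental mode `ũ`. -/
theorem accessibility_fundamental_mode {m n : ℕ}
    (U : Set (ℝ → BV m)) (f : (ℝ → BV m) → Set (ℝ → BV n))
    (hsys : IsSystem U f) (hna : NonAnticip2 U f)
    (ha : ∀ t : ℕ → ℝ, StrictMono t → (∀ M : ℝ, ∃ k, M < t k) →
        ∀ us : ℕ → (ℝ → BV m), (∀ k, us k ∈ U) → concatSeq t us ∈ U)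
    (hb : ∀ u ∈ U, ∃ μ : BV n, ∃ t : ℝ, ∀ x ∈ f u, ∀ s, s < t → x s = μ)
    (hc : ∀ μ : BV n, ∀ u ∈ U, ∀ t : ℝ, ∃ v ∈ U, ∃ t' > t,
        EqOn u v (Iio t) ∧ ∀ y ∈ f v, ∀ s, t' ≤ s → y s = μ) :
    ∃ μ0 : BV n, ∀ μs : ℕ → BV n,
      ∃ t : ℕ → ℝ, StrictMono t ∧ (∀ M : ℝ, ∃ k, M < t k) ∧
      ∃ us : ℕ → (ℝ → BV m), (∀ k, us k ∈ U) ∧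
      ∃ utld ∈ U,
        (∀ x ∈ f (us 0), (∀ s, s < t 0 → x s = μ0) ∧ (∀ s, t 1 ≤ s → x s = μs 1)) ∧
        (∀ k : ℕ, EqOn utld (us k) (Iio (t (k + 1)))) ∧
        (∀ k : ℕ, 1 ≤ k → ∀ x ∈ f (us k), ∀ s, t (k + 1) ≤ s → x s = μs (k + 1)) := by
  classical
  obtain ⟨⟨ustar, hustar⟩, hUsig, hfU⟩ := hsys
  obtain ⟨μ0, T, hT⟩ := hb ustar hustar
  refine ⟨μ0, fun μs => ?_⟩
  have step : ∀ (k : ℕ) (q : {p : (ℝ → BV m) × ℝ // p.1 ∈ U}),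
      ∃ q' : {p : (ℝ → BV m) × ℝ // p.1 ∈ U},
        max q.1.2 (k : ℝ) < q'.1.2 ∧ EqOn q.1.1 q'.1.1 (Iio q.1.2) ∧
        ∀ y ∈ f q'.1.1, ∀ s, q'.1.2 ≤ s → y s = μs (k + 1) := by
    rintro k ⟨⟨u, tt⟩, hu⟩
    obtain ⟨v, hv, t', ht', heq, hy⟩ := hc (μs (k + 1)) u hu (max tt k)
    exact ⟨⟨(v, t'), hv⟩, ht',
      fun s hs => heq (mem_Iio.mpr (lt_of_lt_of_le (mem_Iio.mp hs) (le_max_left _ _))), hy⟩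
  obtain ⟨g, hg0, hgP⟩ : ∃ g : ℕ → {p : (ℝ → BV m) × ℝ // p.1 ∈ U},
      g 0 = ⟨(ustar, T), hustar⟩ ∧ ∀ k,
        max (g k).1.2 (k : ℝ) < (g (k + 1)).1.2 ∧
        EqOn (g k).1.1 (g (k + 1)).1.1 (Iio (g k).1.2) ∧
        ∀ y ∈ f (g (k + 1)).1.1, ∀ s, (g (k + 1)).1.2 ≤ s → y s = μs (k + 1) :=
    ⟨fun k => Nat.rec ⟨(ustar, T), hustar⟩ (fun k ih => (step k ih).choose) k,
      rfl, fun k => (step k _).choose_spec⟩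
  set t : ℕ → ℝ := fun k => (g k).1.2 with ht_def
  set us : ℕ → (ℝ → BV m) := fun k => (g (k + 1)).1.1 with hus_def
  have ht0 : t 0 = T := by show (g 0).1.2 = T; rw [hg0]
  have tmono : StrictMono t :=
    strictMono_nat_of_lt_succ fun k => lt_of_le_of_lt (le_max_left _ _) (hgP k).1
  have tub : ∀ M : ℝ, ∃ k, M < t k := by
    intro M
    obtain ⟨N, hN⟩ := exists_nat_gt M
    exact ⟨N + 1, hN.trans (lt_of_le_of_lt (le_max_right _ _) (hgP N).1)⟩
  have usU : ∀ k, us k ∈ U := fun k => (g (k + 1)).2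
  have hchain : ∀ k s, s < t (k + 1) → us k s = us (k + 1) s :=
    fun k s hs => (hgP (k + 1)).2.1 hs
  have hmonoEq : ∀ a b : ℕ, a ≤ b → ∀ s, s < t (a + 1) → us a s = us b s := by
    intro a b hab
    induction b with
    | zero =>
      intro s _
      rw [Nat.le_zero.mp hab]
    | succ b ih =>
      rcases Nat.le_succ_iff_eq_or_le.mp hab with h | h
      · intro s _; rw [h]
      · intro s hs
        rw [ih h s hs, hchain b s (lt_of_lt_of_le hs (tmono.monotone (by omega)))]
  refine ⟨t, tmono, tub, us, usU, concatSeq t us, ha t tmono tub us usU, ?_, ?_, ?_⟩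
  · intro x hx
    constructor
    · intro s hs
      rw [ht0] at hs
      have heq0 : EqOn ustar (us 0) (Iio T) := by
        have h := (hgP 0).2.1
        rwa [hg0] at h
      have himg := hna T ustar hustar (us 0) (usU 0) heq0
      have hmem : (Iic T).restrict x ∈ (fun x => (Iic T).restrict x) '' f (us 0) :=
        mem_image_of_mem _ hx
      rw [← himg] at hmem
      obtain ⟨x', hx', hxx'⟩ := hmem
      have : x' s = x s := congrFun hxx' ⟨s, hs.le⟩
      rw [← this]
      exact hT x' hx' s hs
    · exact fun s hs => (hgP 0).2.2 x hx s hs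
  · intro k s hs
    have hex : ∃ j, s < t j := ⟨k + 1, hs⟩
    have hval : concatSeq t us s = us (Nat.find hex) s := by
      simp only [concatSeq, dif_pos hex]
    rw [hval]
    have hjle : Nat.find hex ≤ k + 1 := Nat.find_le hs
    have hj : s < t (Nat.find hex) := Nat.find_spec hex
    rcases Nat.lt_succ_iff_lt_or_eq.mp (Nat.lt_succ_of_le hjle) with h | h
    · exact hmonoEq _ k (Nat.lt_succ_iff.mp h) s
        (hj.trans (tmono (Nat.lt_succ_self _)))
    · rw [h]; exact (hchain k s hs).symm
  · rintro k hk x hx s hs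
    obtain ⟨j, rfl⟩ : ∃ j, k = j + 1 := ⟨k - 1, by omega⟩
    exact (hgP (j + 1)).2.2 x hx s hs
end

section
/- Let d_r > 0, d_f > 0 and define f : S → P*(S) (the bounded delay model) by f(u) = {x ∈ S : for all t ∈ ℝ, min_{ξ ∈ [t−d_r, t)} u(ξ) ≤ x(t) ≤ max_{ξ ∈ [t−d_f, t)} u(ξ)}. Then f(u) is nonempty for every u ∈ S, and f satisfies condition (iv) with parameter d = max(d_r, d_f): for all t ∈ ℝ and u, v ∈ S, if u = v on [t−max(d_r, d_f), t), then {x(t) : x ∈ f(u)} = {y(t) : y ∈ f(v)}; moreover f satisfies condition (v): for all t ∈ ℝ and u, v ∈ S, if u = v on (−∞, t], then {x restricted to (−∞, t] : x ∈ f(u)} = {y restricted to (−∞, t] : y ∈ f(v)}. -/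
/-!
Delaying the input by `m = min d_r d_f` always gives a state, because `u (t - m)` lies in both
windows `[t - d_r, t)` and `[t - d_f, t)`. Other states are obtained by gluing: a signal that
meets the bounds up to time `t` is kept a little past `t`, for as long as it and the input at the
left ends of the two windows stay constant, so that sliding the windows only gains input values;
from then on the delayed input takes over. For (iv), the delayed input switched to a constant `b`
at time `t` is extended this way; for (v), a state of `u`, which meets the bounds of `v` up to `t`.
-/

open Set
open scoped Classical

open scoped Classical in
/-- The minimum (infimum) in `B` of the values of `u` on `[a, b)`. -/
noncomputable def icoInf (u : ℝ → Bool) (a b : ℝ) : Bool :=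
  if ∀ ξ, a ≤ ξ → ξ < b → u ξ = true then true else false

open scoped Classical in
/-- The maximum (supremum) in `B` of the values of `u` on `[a, b)`. -/
noncomputable def icoSup (u : ℝ → Bool) (a b : ℝ) : Bool :=
  if ∃ ξ, a ≤ ξ ∧ ξ < b ∧ u ξ = true then true else false

open Filter Topology

theorem StrictMono.ite_lt_sub {β : Type*} [Preorder β] {t r : ℕ → β} (ht : StrictMono t)
    (hr : StrictMono r) {N : ℕ} (h : ∀ k < N, t k < r 0) :
    StrictMono fun k => if k < N then t k else r (k - N) := by
  refine strictMono_nat_of_lt_succ fun k => ?_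
  rcases lt_trichotomy (k + 1) N with hk | hk | hk
  · simp only [if_pos (show k < N by omega), if_pos hk]
    exact ht k.lt_succ_self
  · simp only [if_pos (show k < N by omega), hk, lt_irrefl, if_false, Nat.sub_self]
    exact h k (by omega)
  · simp only [if_neg (show ¬k < N by omega), if_neg (show ¬k + 1 < N by omega)]
    exact hr (by omega)

namespace IsSignal

variable {α : Type*} {x z : ℝ → α}

theorem const (b : α) : IsSignal fun _ : ℝ => b :=
  ⟨b, fun k => k, strictMono_nat_of_lt_succ fun k => by simp,
    fun M => (exists_nat_gt M).imp fun _ h => h, fun _ _ => rfl, fun _ _ _ _ => rfl⟩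

theorem comp_sub (hx : IsSignal x) (m : ℝ) : IsSignal fun s => x (s - m) := by
  obtain ⟨a, t, hmono, hunb, hinit, hconst⟩ := hx
  refine ⟨a, fun k => t k + m, fun i j hij => by simpa using hmono hij, fun M => ?_,
    fun s hs => hinit _ (by linarith), fun k s h₁ h₂ => ?_⟩
  · obtain ⟨k, hk⟩ := hunb (M - m)
    exact ⟨k, by linarith⟩
  · simpa using hconst k (s - m) (by linarith) (by linarith)

theorem exists_seq_from (hx : IsSignal x) (c : ℝ) :
    ∃ r : ℕ → ℝ, StrictMono r ∧ r 0 = c ∧ (∀ M : ℝ, ∃ k, M < r k) ∧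
      ∀ k s, r k ≤ s → s < r (k + 1) → x s = x (r k) := by
  obtain ⟨a, t, hmono, hunb, hinit, hconst⟩ := hx
  have hex : ∃ n, c < t n := hunb c
  set N := Nat.find hex
  have hcN : c < t N := Nat.find_spec hex
  have hconst_c : ∀ s, c ≤ s → s < t N → x s = x c := by
    rcases Nat.eq_zero_or_pos N with hN | hN
    · intro s _ hs
      rw [hinit s (by rwa [← hN]), hinit c (by rwa [← hN])]
    · have hprev : t (N - 1) ≤ c := not_lt.mp (Nat.find_min hex (by omega))
      have hsucc : N - 1 + 1 = N := by omega
      intro s hcs hs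
      rw [hconst _ s (hprev.trans hcs) (by rwa [hsucc]), hconst _ c hprev (by rwa [hsucc])]
  refine ⟨fun k => Nat.casesOn k c fun k => t (N + k), strictMono_nat_of_lt_succ ?_, rfl,
    fun M => ?_, ?_⟩
  · rintro (_ | k)
    · simpa using hcN
    · exact hmono (by omega)
  · obtain ⟨k, hk⟩ := hunb M
    exact ⟨k + 1, hk.trans_le (hmono.monotone (by omega))⟩
  · rintro (_ | k) s h₁ h₂
    · exact hconst_c s h₁ (by simpa using h₂)
    · exact hconst (N + k) s h₁ h₂

theorem eventually_eqOn_Ico (hx : IsSignal x) (p : ℝ) :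
    ∀ᶠ δ in 𝓝[>] (0 : ℝ), ∀ s ∈ Ico p (p + δ), x s = x p := by
  obtain ⟨r, hmono, hr0, -, hconst⟩ := hx.exists_seq_from p
  have hp1 : p < r 1 := hr0 ▸ hmono zero_lt_one
  filter_upwards [Ioo_mem_nhdsGT (sub_pos.2 hp1)] with δ hδ s hs
  simpa only [hr0] using hconst 0 s (hr0 ▸ hs.1) (by linarith [hs.2, hδ.2])

theorem piecewise_lt (hx : IsSignal x) (hz : IsSignal z) (c : ℝ) :
    IsSignal fun s => if s < c then x s else z s := by
  obtain ⟨a, t, hmono, hunb, hinit, hconst⟩ := hx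
  obtain ⟨r, rmono, hr0, runb, rconst⟩ := hz.exists_seq_from c
  have hex : ∃ n, c ≤ t n := (hunb c).imp fun _ h => h.le
  set N := Nat.find hex
  have hcN : c ≤ t N := Nat.find_spec hex
  have hlt : ∀ k < N, t k < c := fun k hk => not_le.mp (Nat.find_min hex hk)
  set w : ℕ → ℝ := fun k => if k < N then t k else r (k - N)
  have hw_lt : ∀ k < N, w k = t k := fun k hk => if_pos hk
  have hw_ge : ∀ k, N ≤ k → w k = r (k - N) := fun k hk => if_neg (not_lt.mpr hk)
  have hw_N : w N = c := by rw [hw_ge N le_rfl, Nat.sub_self, hr0]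
  refine ⟨a, w, hmono.ite_lt_sub rmono (hr0 ▸ hlt), fun M => ?_, fun s hs => ?_,
    fun k s h₁ h₂ => ?_⟩
  · obtain ⟨k, hk⟩ := runb M
    exact ⟨N + k, by rwa [hw_ge (N + k) (by omega), Nat.add_sub_cancel_left]⟩
  · have hs : s < t 0 ∧ s < c := by
      rcases Nat.eq_zero_or_pos N with hN | hN
      · rw [← hN, hw_N] at hs
        exact ⟨hs.trans_le (hN ▸ hcN), hs⟩
      · rw [hw_lt 0 hN] at hs
        exact ⟨hs, hs.trans (hlt 0 hN)⟩
    simp only [if_pos hs.2]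
    exact hinit s hs.1
  · show (if s < c then x s else z s) = if w k < c then x (w k) else z (w k)
    rcases lt_or_ge k N with hk | hk
    · rw [hw_lt k hk] at h₁ ⊢
      have hs : s < t (k + 1) ∧ s < c := by
        rcases (show k + 1 ≤ N from hk).lt_or_eq with hk' | hk'
        · rw [hw_lt _ hk'] at h₂
          exact ⟨h₂, h₂.trans (hlt _ hk')⟩
        · rw [hk', hw_N] at h₂
          exact ⟨h₂.trans_le (hk' ▸ hcN), h₂⟩
      rw [if_pos hs.2, if_pos (hlt k hk)]
      exact hconst k s h₁ hs.1
    · rw [hw_ge k hk] at h₁ ⊢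
      rw [hw_ge (k + 1) (by omega), show k + 1 - N = k - N + 1 by omega] at h₂
      have hcr : c ≤ r (k - N) := hr0 ▸ rmono.monotone (Nat.zero_le _)
      rw [if_neg (not_lt.mpr (hcr.trans h₁)), if_neg (not_lt.mpr hcr)]
      exact rconst _ s h₁ h₂

end IsSignal

theorem icoInf_eq_sInf_image (u : ℝ → Bool) (a b : ℝ) :
    icoInf u a b = sInf (u '' Ico a b) := by
  unfold icoInf
  split_ifs with h
  · exact (sInf_eq_top.mpr <| forall_mem_image.mpr fun ξ hξ => h ξ hξ.1 hξ.2).symm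
  · push Not at h
    obtain ⟨ξ, h₁, h₂, hξ⟩ := h
    have hle := sInf_le (mem_image_of_mem u (show ξ ∈ Ico a b from ⟨h₁, h₂⟩))
    rw [Bool.eq_false_iff.mpr hξ] at hle
    exact (eq_bot_iff.mpr hle).symm

theorem icoSup_eq_sSup_image (u : ℝ → Bool) (a b : ℝ) :
    icoSup u a b = sSup (u '' Ico a b) := by
  unfold icoSup
  split_ifs with h
  · obtain ⟨ξ, h₁, h₂, hξ⟩ := h
    have hle := le_sSup (mem_image_of_mem u (show ξ ∈ Ico a b from ⟨h₁, h₂⟩))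
    rw [hξ] at hle
    exact (eq_top_iff.mpr hle).symm
  · push Not at h
    exact (sSup_eq_bot.mpr <| forall_mem_image.mpr fun ξ hξ => by
      simpa using h ξ hξ.1 hξ.2).symm

namespace BoundedDelay

def Admissible (dr df : ℝ) (u : ℝ → Bool) (t : ℝ) (b : Bool) : Prop :=
  icoInf u (t - dr) t ≤ b ∧ b ≤ icoSup u (t - df) t

variable {dr df : ℝ} {u v : ℝ → Bool} {t : ℝ}

theorem admissible_comp_sub {m : ℝ} (hm : 0 < m) (hmr : m ≤ dr) (hmf : m ≤ df) :
    Admissible dr df v t (v (t - m)) := by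
  rw [Admissible, icoInf_eq_sInf_image, icoSup_eq_sSup_image]
  exact ⟨sInf_le (mem_image_of_mem v ⟨by linarith, by linarith⟩),
    le_sSup (mem_image_of_mem v ⟨by linarith, by linarith⟩)⟩

theorem admissible_congr (h : EqOn u v (Ico (t - max dr df) t)) {b : Bool} :
    Admissible dr df u t b ↔ Admissible dr df v t b := by
  have hwin : ∀ {d}, d ≤ max dr df → u '' Ico (t - d) t = v '' Ico (t - d) t := fun hd =>
    (h.mono (Ico_subset_Ico_left (by linarith))).image_eq
  rw [Admissible, Admissible, icoInf_eq_sInf_image, icoSup_eq_sSup_image, icoInf_eq_sInf_image,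
    icoSup_eq_sSup_image, hwin (le_max_left _ _), hwin (le_max_right _ _)]

theorem Admissible.of_image_subset {s : ℝ} {b : Bool} (h : Admissible dr df v t b)
    (hr : v '' Ico (t - dr) t ⊆ v '' Ico (s - dr) s)
    (hf : v '' Ico (t - df) t ⊆ v '' Ico (s - df) s) :
    Admissible dr df v s b := by
  rw [Admissible, icoInf_eq_sInf_image, icoSup_eq_sSup_image] at h ⊢
  exact ⟨(sInf_le_sInf hr).trans h.1, h.2.trans (sSup_le_sSup hf)⟩

theorem image_Ico_subset_image_Ico_of_eqOn {d δ s : ℝ} (hd : 0 < d)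
    (hconst : ∀ σ ∈ Ico (t - d) (t - d + δ), v σ = v (t - d)) (hs : s ∈ Ico t (t + δ)) :
    v '' Ico (t - d) t ⊆ v '' Ico (s - d) s := by
  rintro _ ⟨ξ, hξ, rfl⟩
  by_cases hξs : s - d ≤ ξ
  · exact ⟨ξ, ⟨hξs, hξ.2.trans_le hs.1⟩, rfl⟩
  · have hξs : ξ < s - d := not_le.mp hξs
    refine ⟨s - d, ⟨le_rfl, by linarith⟩, ?_⟩
    rw [hconst _ ⟨by linarith [hs.1], by linarith [hs.2]⟩,
      hconst ξ ⟨hξ.1, by linarith [hs.2]⟩]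

def states (dr df : ℝ) (u : ℝ → Bool) : Set (ℝ → Bool) :=
  {x | IsSignal x ∧ ∀ t, Admissible dr df u t (x t)}

theorem comp_sub_min_mem_states (hdr : 0 < dr) (hdf : 0 < df) (hv : IsSignal v) :
    (fun s => v (s - min dr df)) ∈ states dr df v :=
  ⟨hv.comp_sub _, fun _ => admissible_comp_sub (lt_min hdr hdf) (min_le_left _ _)
    (min_le_right _ _)⟩

theorem exists_mem_states_eqOn_Iic (hdr : 0 < dr) (hdf : 0 < df) (hv : IsSignal v)
    {x : ℝ → Bool} (hx : IsSignal x) (hxt : ∀ s ≤ t, Admissible dr df v s (x s)) :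
    ∃ y ∈ states dr df v, EqOn y x (Iic t) := by
  obtain ⟨δ, ⟨⟨hxδ, hrδ⟩, hfδ⟩, hδ⟩ := ((hx.eventually_eqOn_Ico t).and
    (hv.eventually_eqOn_Ico (t - dr)) |>.and (hv.eventually_eqOn_Ico (t - df)) |>.and
    self_mem_nhdsWithin).exists
  have hdelay := comp_sub_min_mem_states hdr hdf hv
  refine ⟨fun s => if s < t + δ then x s else v (s - min dr df),
    ⟨hx.piecewise_lt hdelay.1 _, fun s => ?_⟩,
    fun s hs => if_pos (by linarith [mem_Iic.mp hs])⟩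
  dsimp only
  by_cases hsδ : s < t + δ
  · rw [if_pos hsδ]
    rcases le_or_gt s t with hst | hts
    · exact hxt s hst
    · rw [hxδ s ⟨hts.le, hsδ⟩]
      exact (hxt t le_rfl).of_image_subset
        (image_Ico_subset_image_Ico_of_eqOn hdr hrδ ⟨hts.le, hsδ⟩)
        (image_Ico_subset_image_Ico_of_eqOn hdf hfδ ⟨hts.le, hsδ⟩)
  · rw [if_neg hsδ]
    exact hdelay.2 s

theorem exists_mem_states_apply_eq (hdr : 0 < dr) (hdf : 0 < df) (hv : IsSignal v) {b : Bool}
    (hb : Admissible dr df v t b) : ∃ y ∈ states dr df v, y t = b := by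
  have hdelay := comp_sub_min_mem_states hdr hdf hv
  obtain ⟨y, hy, hyx⟩ := exists_mem_states_eqOn_Iic hdr hdf hv
    (hdelay.1.piecewise_lt (IsSignal.const b) t) fun s hst => by
      rcases hst.lt_or_eq with hst | rfl
      · rw [if_pos hst]
        exact hdelay.2 s
      · rwa [if_neg (lt_irrefl _)]
  exact ⟨y, hy, (hyx self_mem_Iic).trans (if_neg (lt_irrefl t))⟩

theorem image_eval_states_subset (hdr : 0 < dr) (hdf : 0 < df) (hv : IsSignal v)
    (h : EqOn u v (Ico (t - max dr df) t)) :
    (fun x => x t) '' states dr df u ⊆ (fun x => x t) '' states dr df v := by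
  rintro _ ⟨x, hx, rfl⟩
  exact exists_mem_states_apply_eq hdr hdf hv ((admissible_congr h).mp (hx.2 t))

theorem image_domRestrict_states_subset (hdr : 0 < dr) (hdf : 0 < df) (hv : IsSignal v)
    (h : EqOn u v (Iic t)) :
    (fun x => (Iic t).domRestrict x) '' states dr df u ⊆
      (fun x => (Iic t).domRestrict x) '' states dr df v := by
  rintro _ ⟨x, hx, rfl⟩
  obtain ⟨y, hy, hyx⟩ := exists_mem_states_eqOn_Iic hdr hdf hv hx.1 fun s hst =>
    (admissible_congr (h.mono fun ξ hξ => hξ.2.le.trans hst)).mp (hx.2 s)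
  exact ⟨y, hy, funext fun s => hyx s.2⟩

end BoundedDelay

open BoundedDelay in
/-- the bounded delay model
`f(u) = {x | ∀ t, min_{ξ∈[t-d_r,t)} u(ξ) ≤ x(t) ≤ max_{ξ∈[t-d_f,t)} u(ξ)}` has nonempty
sets of states and satisfies conditions (iv) (with `d = max(d_r, d_f)`) and (v). -/
theorem boundedDelay_nonAnticip (dr df : ℝ) (hdr : 0 < dr) (hdf : 0 < df)
    (f : (ℝ → Bool) → Set (ℝ → Bool))
    (hfdef : ∀ u, f u = {x | IsSignal x ∧
        ∀ t : ℝ, icoInf u (t - dr) t ≤ x t ∧ x t ≤ icoSup u (t - df) t}) :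
    (∀ u : ℝ → Bool, IsSignal u → (f u).Nonempty) ∧
    (∀ t : ℝ, ∀ u v : ℝ → Bool, IsSignal u → IsSignal v →
        EqOn u v (Ico (t - max dr df) t) →
        ((fun x => x t) '' f u) = ((fun x => x t) '' f v)) ∧
    (∀ t : ℝ, ∀ u v : ℝ → Bool, IsSignal u → IsSignal v →
        EqOn u v (Iic t) →
        ((fun x : ℝ → Bool => (Iic t).restrict x) '' f u) =
          ((fun x : ℝ → Bool => (Iic t).restrict x) '' f v)) := by
  obtain rfl : f = states dr df := funext hfdef
  exact ⟨fun u hu => ⟨_, comp_sub_min_mem_states hdr hdf hu⟩,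
    fun t u v hu hv h => (image_eval_states_subset hdr hdf hv h).antisymm
      (image_eval_states_subset hdr hdf hu h.symm),
    fun t u v hu hv h => (image_domRestrict_states_subset hdr hdf hv h).antisymm
      (image_domRestrict_states_subset hdr hdf hu h.symm)⟩
end

section
/- The two notions of non-anticipation are logically independent: (a) the deterministic system f : S^(m) → S defined by f(u)(t) = χ_[0,1)(t) XOR (u₁(t−1)·χ_[1,∞)(t)) (where u₁ is the first coordinate of u and χ_A is the characteristic function of A ⊆ ℝ) is non-anticipatory in the second sense but not non-anticipatory in the first sense; (b) the deterministic system g : S → S defined by g(u) = 1 (the constant signal 1) if u = χ_[0,∞) and g(u) = u otherwise, is non-anticipatory in the first sense but not non-anticipatory in the second sense. -/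
open Set
open scoped Classical

open scoped Classical in
/-- The characteristic function `χ_A : ℝ → B` of a set `A ⊆ ℝ`. -/
noncomputable def chI (A : Set ℝ) : ℝ → Bool := fun t => if t ∈ A then true else false

lemma chI_of_mem {A : Set ℝ} {t : ℝ} (ht : t ∈ A) : chI A t = true := by
  simp [chI, ht]

lemma chI_of_notMem {A : Set ℝ} {t : ℝ} (ht : t ∉ A) : chI A t = false := by
  simp [chI, ht]

lemma isConstantSig_const {α : Type*} (c : α) : IsConstantSig (fun _ : ℝ => c) :=
  fun _ _ => rfl

lemma isSignal_const {α : Type*} (c : α) : IsSignal (fun _ : ℝ => c) :=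
  ⟨c, fun k => k, Nat.strictMono_cast, exists_nat_gt, fun _ _ => rfl, fun _ _ _ _ => rfl⟩

lemma isSignal_chI_Ici (a : ℝ) : IsSignal (chI (Ici a)) := by
  refine ⟨false, fun k => a + k, fun i j hij => by simpa using hij,
    fun M => ⟨⌈M - a⌉₊ + 1, by push_cast; linarith [Nat.le_ceil (M - a)]⟩, ?_, ?_⟩
  · intro s hs
    exact chI_of_notMem (by simpa using hs)
  · intro k s hks _
    have hk : a ≤ a + k := le_add_of_nonneg_right k.cast_nonneg
    rw [chI_of_mem (mem_Ici.2 hk), chI_of_mem (mem_Ici.2 (hk.trans hks))]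

lemma eqOn_Iic_of_eqOn_Iio_of_delay {α β : Type*} {F : (ℝ → α) → ℝ → β} {d : ℝ} (hd : 0 < d)
    (G : ℝ → α → β) (hF : ∀ u s, F u s = G s (u (s - d))) {u v : ℝ → α} {t : ℝ}
    (huv : EqOn u v (Iio t)) : EqOn (F u) (F v) (Iic t) := fun s hs => by
  rw [hF, hF, huv (show s - d < t by linarith [mem_Iic.1 hs])]

lemma firstSense_of_eq_or_isConstantSig {α : Type*} {u x : ℝ → α}
    (h : x = u ∨ IsConstantSig x) :
    IsConstantSig x ∨ (¬ IsConstantSig u ∧ ¬ IsConstantSig x ∧ firstSwitch u ≤ firstSwitch x) := by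
  by_cases hx : IsConstantSig x
  · exact Or.inl hx
  · obtain rfl : x = u := h.resolve_right hx
    exact Or.inr ⟨hx, hx, le_rfl⟩

/-- the two notions of non-anticipation are logically independent:
`f(u)(t) = χ_[0,1)(t) ⊕ u₁(t-1)·χ_[1,∞)(t)` is non-anticipatory in the second sense but
not in the first sense, while `g(u) = 1` if `u = χ_[0,∞)`, `g(u) = u` otherwise, is
non-anticipatory in the first sense but not in the second sense. -/
theorem nonAnticip_notions_independent {m : ℕ} (hm : 0 < m)
    (f : (ℝ → BV m) → (ℝ → Bool))
    (hf : ∀ u t, f u t = xor (chI (Ico (0:ℝ) 1) t) (u (t - 1) ⟨0, hm⟩ && chI (Ici (1:ℝ)) t))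
    (g : (ℝ → Bool) → (ℝ → Bool))
    (hg : ∀ u, g u = if u = chI (Ici (0:ℝ)) then (fun _ => true) else u) :
    (∀ t : ℝ, ∀ u v : ℝ → BV m, IsSignal u → IsSignal v →
        EqOn u v (Iio t) → EqOn (f u) (f v) (Iic t)) ∧
    ¬ (∀ u : ℝ → BV m, IsSignal u → IsConstantSig (f u) ∨
        (¬ IsConstantSig u ∧ ¬ IsConstantSig (f u) ∧ firstSwitch u ≤ firstSwitch (f u))) ∧
    (∀ u : ℝ → Bool, IsSignal u → IsConstantSig (g u) ∨
        (¬ IsConstantSig u ∧ ¬ IsConstantSig (g u) ∧ firstSwitch u ≤ firstSwitch (g u))) ∧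
    ¬ (∀ t : ℝ, ∀ u v : ℝ → Bool, IsSignal u → IsSignal v →
        EqOn u v (Iio t) → EqOn (g u) (g v) (Iic t)) := by
  refine ⟨?_, ?_, ?_, ?_⟩
  · intro t u v _ _ huv
    exact eqOn_Iic_of_eqOn_Iio_of_delay one_pos
      (fun s a => xor (chI (Ico 0 1) s) (a ⟨0, hm⟩ && chI (Ici 1) s)) hf huv
  · -- the constant input `false` produces the variable output `χ_[0,1)`
    intro h
    have hvar : ¬ IsConstantSig (f fun _ => fun _ => false) := fun hc => by
      simpa [hf, chI] using hc 0 2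
    rcases h _ (isSignal_const _) with hc | ⟨hu, -⟩
    exacts [hvar hc, hu (isConstantSig_const _)]
  · intro u _
    refine firstSense_of_eq_or_isConstantSig ?_
    rw [hg]
    split_ifs
    exacts [Or.inr (isConstantSig_const _), Or.inl rfl]
  · -- `χ_[0,∞)` and the constant `false` agree before `0`, but `g` separates them at `-1`
    intro h
    have hagree : EqOn (chI (Ici (0:ℝ))) (fun _ => false) (Iio 0) :=
      fun s hs => chI_of_notMem (not_le.2 (mem_Iio.1 hs))
    have hne : (fun _ => false : ℝ → Bool) ≠ chI (Ici (0:ℝ)) := fun he => by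
      simpa [chI] using congrFun he 0
    have hsame := h 0 _ _ (isSignal_chI_Ici 0) (isSignal_const _) hagree
      (show (-1:ℝ) ∈ Iic 0 by norm_num)
    simp [hg, hne] at hsame
end
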